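/- arXiv:2509.04749 — 2 statements merged into one kernel-verified Lean document; each statement's English description precedes it below -/
import Mathlib

section
/- Fix β > 0 and α ∈ [0,1). For every x ∈ ℝ there exists a unique θ = F(x) ∈ ℝ satisfying θ = α + (1 − α)·Φ(√β·(x − θ)). The resulting function F : ℝ → ℝ is differentiable, and for every x, F′(x) = √β·(1 − α)·φ(√β·(x − F(x))) / (1 + √β·(1 − α)·φ(√β·(x − F(x)))); in particular 0 < F′(x) < 1 for all x. -/
open Real Set MeasureTheory

/-- The standard normal density `φ(t) = exp(−t²/2)/√(2π)`. -/
noncomputable def stdNormalPDF (t : ℝ) : ℝ :=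
  Real.exp (-(t ^ 2) / 2) / Real.sqrt (2 * Real.pi)

/-- The standard normal cumulative distribution function `Φ`. -/
noncomputable def stdNormalCDF (x : ℝ) : ℝ :=
  ∫ t in Set.Iic x, stdNormalPDF t

/-!
Put `s = √β` and measure the gap between signal and regime thresholds by `u = s (x − θ)`.
The indifference condition then says `x = K(u) := α + (1 − α) Φ(u) + u / s`, and `K` is an
increasing bijection with derivative `(1 − α) φ(u) + 1 / s > 0`. Hence the gap is the
differentiable function `u = K⁻¹(x)`, the threshold is `F x = x − K⁻¹(x) / s`, and the inverse
function rule gives `F′ = 1 − 1 / (s K′(u)) = s(1 − α)φ(u) / (1 + s(1 − α)φ(u))`.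
-/

open Filter

theorem hasDerivAt_integral_Iic {E : Type*} [NormedAddCommGroup E] [NormedSpace ℝ E]
    [CompleteSpace E] {f : ℝ → E} {x : ℝ} (hf : Integrable f) (hx : ContinuousAt f x) :
    HasDerivAt (fun u => ∫ t in Iic u, f t) (f x) x := by
  have hsplit : (fun u => ∫ t in Iic u, f t) =
      fun u => (∫ t in Iic 0, f t) + ∫ t in (0 : ℝ)..u, f t := by
    funext u
    rw [← intervalIntegral.integral_Iic_sub_Iic hf.integrableOn hf.integrableOn,
      add_sub_cancel]
  rw [hsplit]
  exact (intervalIntegral.integral_hasDerivAt_right hf.intervalIntegrable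
    (hf.aestronglyMeasurable.stronglyMeasurableAtFilter) hx).const_add _

theorem stdNormalPDF_pos (t : ℝ) : 0 < stdNormalPDF t := by
  unfold stdNormalPDF
  positivity

theorem stdNormalPDF_eq_exp_mul (t : ℝ) :
    stdNormalPDF t = Real.exp (-(1 / 2) * t ^ 2) * (Real.sqrt (2 * Real.pi))⁻¹ := by
  rw [stdNormalPDF, div_eq_mul_inv]
  ring_nf

theorem continuous_stdNormalPDF : Continuous stdNormalPDF := by
  unfold stdNormalPDF
  fun_prop

theorem integrable_stdNormalPDF : Integrable stdNormalPDF := by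
  simp_rw [funext stdNormalPDF_eq_exp_mul]
  exact (integrable_exp_neg_mul_sq (by norm_num)).mul_const _

theorem integral_stdNormalPDF : ∫ t, stdNormalPDF t = 1 := by
  simp_rw [stdNormalPDF_eq_exp_mul]
  rw [integral_mul_const, integral_gaussian, show π / (1 / 2) = 2 * π by ring]
  exact mul_inv_cancel₀ (by positivity)

theorem stdNormalCDF_nonneg (x : ℝ) : 0 ≤ stdNormalCDF x :=
  integral_nonneg fun t => (stdNormalPDF_pos t).le

theorem stdNormalCDF_le_one (x : ℝ) : stdNormalCDF x ≤ 1 :=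
  integral_stdNormalPDF ▸ setIntegral_le_integral integrable_stdNormalPDF
    (Eventually.of_forall fun t => (stdNormalPDF_pos t).le)

theorem hasDerivAt_stdNormalCDF (x : ℝ) : HasDerivAt stdNormalCDF (stdNormalPDF x) x :=
  hasDerivAt_integral_Iic integrable_stdNormalPDF continuous_stdNormalPDF.continuousAt

/-- With `u = s (x − θ)`, the condition `θ = α + (1 − α) Φ(u)` reads `x = indifferentSignal α s u`. -/
noncomputable def indifferentSignal (α s u : ℝ) : ℝ :=
  α + (1 - α) * stdNormalCDF u + u / s

namespace indifferentSignal

variable {α s : ℝ}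

theorem hasDerivAt (α s u : ℝ) :
    HasDerivAt (indifferentSignal α s) ((1 - α) * stdNormalPDF u + s⁻¹) u :=
  (((hasDerivAt_stdNormalCDF u).const_mul (1 - α)).const_add α).add
    ((hasDerivAt_id u).div_const s |>.congr_deriv (one_div s))

theorem apply_eq_iff (hs : s ≠ 0) (x θ : ℝ) :
    indifferentSignal α s (s * (x - θ)) = x ↔ θ = α + (1 - α) * stdNormalCDF (s * (x - θ)) := by
  rw [indifferentSignal, mul_div_cancel_left₀ _ hs]
  constructor <;> intro h <;> linarith

variable (hα : α ≤ 1) (hs : 0 < s)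
include hα hs

theorem deriv_pos (u : ℝ) : 0 < (1 - α) * stdNormalPDF u + s⁻¹ := by
  have := stdNormalPDF_pos u
  have : 0 ≤ 1 - α := by linarith
  positivity

theorem strictMono : StrictMono (indifferentSignal α s) :=
  strictMono_of_deriv_pos fun u => (hasDerivAt α s u).deriv ▸ deriv_pos hα hs u

theorem surjective : Function.Surjective (indifferentSignal α s) := by
  have hcont : Continuous (indifferentSignal α s) :=
    continuous_iff_continuousAt.2 fun u => (hasDerivAt α s u).continuousAt
  have hlin : ∀ c : ℝ, Tendsto (fun u : ℝ => c + u / s) atTop atTop ∧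
      Tendsto (fun u : ℝ => c + u / s) atBot atBot := fun c =>
    ⟨tendsto_atTop_add_const_left _ c (tendsto_id.atTop_div_const hs),
      tendsto_atBot_add_const_left _ c (tendsto_id.atBot_div_const hs)⟩
  refine hcont.surjective (tendsto_atTop_mono (fun u => ?_) (hlin α).1)
    (tendsto_atBot_mono (fun u => ?_) (hlin 1).2)
  · have := mul_nonneg (sub_nonneg.2 hα) (stdNormalCDF_nonneg u)
    simp only [indifferentSignal]
    linarith
  · have := mul_le_of_le_one_right (sub_nonneg.2 hα) (stdNormalCDF_le_one u)
    simp only [indifferentSignal]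
    linarith

noncomputable def orderIso : ℝ ≃o ℝ :=
  StrictMono.orderIsoOfSurjective _ (strictMono hα hs) (surjective hα hs)

theorem orderIso_symm_eq_iff (x u : ℝ) :
    (orderIso hα hs).symm x = u ↔ indifferentSignal α s u = x :=
  (orderIso hα hs).symm_apply_eq.trans eq_comm

theorem hasDerivAt_orderIso_symm (x : ℝ) :
    HasDerivAt (orderIso hα hs).symm
      ((1 - α) * stdNormalPDF ((orderIso hα hs).symm x) + s⁻¹)⁻¹ x :=
  .of_local_left_inverse (orderIso hα hs).symm.continuous.continuousAt (hasDerivAt α s _)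
    (deriv_pos hα hs _).ne' (Eventually.of_forall (orderIso hα hs).apply_symm_apply)

end indifferentSignal

section regimeThreshold

open indifferentSignal

variable {α s : ℝ} (hα : α ≤ 1) (hs : 0 < s)

/-- The paper's `F`. -/
noncomputable def regimeThreshold (x : ℝ) : ℝ :=
  x - (orderIso hα hs).symm x / s

theorem mul_sub_regimeThreshold (x : ℝ) :
    s * (x - regimeThreshold hα hs x) = (orderIso hα hs).symm x := by
  rw [regimeThreshold, sub_sub_cancel, mul_div_cancel₀ _ hs.ne']

theorem eq_regimeThreshold_iff (x θ : ℝ) :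
    θ = α + (1 - α) * stdNormalCDF (s * (x - θ)) ↔ θ = regimeThreshold hα hs x := by
  rw [← apply_eq_iff hs.ne', ← orderIso_symm_eq_iff hα hs]
  constructor
  · intro h
    rw [regimeThreshold, h, mul_div_cancel_left₀ _ hs.ne', sub_sub_cancel]
  · rintro rfl
    exact (mul_sub_regimeThreshold hα hs x).symm

theorem hasDerivAt_regimeThreshold (x : ℝ) :
    HasDerivAt (regimeThreshold hα hs)
      (s * (1 - α) * stdNormalPDF ((orderIso hα hs).symm x) /
        (1 + s * (1 - α) * stdNormalPDF ((orderIso hα hs).symm x))) x := by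
  refine ((hasDerivAt_id x).sub ((hasDerivAt_orderIso_symm hα hs x).div_const s)).congr_deriv ?_
  have hK' := deriv_pos hα hs ((orderIso hα hs).symm x)
  rw [mul_assoc s]
  generalize (1 - α) * stdNormalPDF ((orderIso hα hs).symm x) = q at hK' ⊢
  have hprod : (q + s⁻¹) * s = 1 + s * q := by
    rw [add_mul, inv_mul_cancel₀ hs.ne']
    ring
  have hden : 1 + s * q ≠ 0 := hprod ▸ (mul_pos hK' hs).ne'
  rw [div_eq_mul_inv, ← mul_inv, hprod, eq_div_iff hden, sub_mul, inv_mul_cancel₀ hden]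
  ring

end regimeThreshold

/-- For `β > 0`, `α ∈ [0,1)`: for every `x` there is a unique `θ = F(x)`
with `θ = α + (1 − α)Φ(√β(x − θ))`; the resulting function `F` is differentiable with
`F′(x) = √β(1−α)φ(√β(x − F x)) / (1 + √β(1−α)φ(√β(x − F x))) ∈ (0,1)`. -/
theorem implicit_regime_threshold
    (β α : ℝ) (hβ : 0 < β) (hα : α ∈ Set.Ico (0 : ℝ) 1) :
    (∀ x : ℝ, ∃! θ : ℝ, θ = α + (1 - α) * stdNormalCDF (Real.sqrt β * (x - θ))) ∧
    (∀ F : ℝ → ℝ,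
      (∀ x : ℝ, F x = α + (1 - α) * stdNormalCDF (Real.sqrt β * (x - F x))) →
      ∀ x : ℝ,
        HasDerivAt F
          (Real.sqrt β * (1 - α) * stdNormalPDF (Real.sqrt β * (x - F x)) /
            (1 + Real.sqrt β * (1 - α) * stdNormalPDF (Real.sqrt β * (x - F x)))) x ∧
        0 < Real.sqrt β * (1 - α) * stdNormalPDF (Real.sqrt β * (x - F x)) /
            (1 + Real.sqrt β * (1 - α) * stdNormalPDF (Real.sqrt β * (x - F x))) ∧
        Real.sqrt β * (1 - α) * stdNormalPDF (Real.sqrt β * (x - F x)) /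
            (1 + Real.sqrt β * (1 - α) * stdNormalPDF (Real.sqrt β * (x - F x))) < 1) := by
  obtain ⟨-, hα1⟩ := hα
  have hs : 0 < √β := Real.sqrt_pos.2 hβ
  have hsol := eq_regimeThreshold_iff hα1.le hs
  refine ⟨fun x => ⟨_, (hsol x _).2 rfl, fun θ => (hsol x θ).1⟩, fun F hF x => ?_⟩
  obtain rfl : F = regimeThreshold hα1.le hs := funext fun y => (hsol y _).1 (hF y)
  rw [mul_sub_regimeThreshold]
  have hp : 0 < √β * (1 - α) * stdNormalPDF ((indifferentSignal.orderIso hα1.le hs).symm x) :=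
    mul_pos (mul_pos hs (sub_pos.2 hα1)) (stdNormalPDF_pos _)
  exact ⟨hasDerivAt_regimeThreshold hα1.le hs x, div_pos hp (by linarith),
    (div_lt_one (by linarith)).2 (by linarith)⟩
end

section
/- Let β > 0 and r > 0, and define α* = 1 + 2r − √(1 + 4r²), θ* = 1 + r − (1/2)·√(1 + 4r²), x* = θ*, and y* = z* = r·√(2β/π)·(√(1 + 4r²) − 2r). Then: (i) α* ∈ (0,1); (ii) θ* = α* + (1 − α*)·(1/2), i.e. the regime indifference condition holds with c = 1/2; (iii) Φ(√β·(θ* − x*)) = 1/2, the citizen indifference condition with c = 1/2; (iv) x* = θ* + y* − z*; (v) y* = √β·φ(0)·α*·(1 − α*/2), the regime's first-order condition; (vi) z* = 2r·√β·(1 − α*)·φ(0), the opposition's first-order condition; where φ(0) = 1/√(2π). -/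
open Real Set MeasureTheory

open ProbabilityTheory

/-! With `s = √(1 + 4r²)` all six claims are polynomial identities in `s`, `r`, `√β` and
`φ(0)` modulo `s² = 1 + 4r²`, together with `2r < s < 1 + 2r` for `(i)`. The transcendental
inputs are `Φ(0) = 1/2`, by symmetry of the density, and `√(2β/π) = 2√β·φ(0)`. -/

lemma integral_Iic_zero_eq_half_integral_of_even {f : ℝ → ℝ} (hf : Integrable f)
    (heven : ∀ t, f (-t) = f t) :
    ∫ t in Iic 0, f t = (∫ t, f t) / 2 := by
  have hsym : ∫ t in Iic (0 : ℝ), f t = ∫ t in Ioi 0, f t := by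
    simpa [heven] using integral_comp_neg_Iic 0 f
  rw [← intervalIntegral.integral_Iic_add_Ioi hf.integrableOn hf.integrableOn, ← hsym]
  ring

lemma stdNormalPDF_eq_gaussianPDFReal : stdNormalPDF = gaussianPDFReal 0 1 := by
  ext t
  simp [stdNormalPDF, gaussianPDFReal, div_eq_inv_mul]

lemma stdNormalCDF_zero : stdNormalCDF 0 = 1 / 2 := by
  rw [stdNormalCDF, stdNormalPDF_eq_gaussianPDFReal,
    integral_Iic_zero_eq_half_integral_of_even (integrable_gaussianPDFReal 0 1)
      (fun t => by simp [gaussianPDFReal]),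
    integral_gaussianPDFReal_eq_one 0 one_ne_zero]

lemma stdNormalPDF_zero : stdNormalPDF 0 = (√(2 * π))⁻¹ := by
  simp [stdNormalPDF]

lemma sqrt_two_mul_div_pi (β : ℝ) : √(2 * β / π) = 2 * √β * stdNormalPDF 0 := by
  rw [stdNormalPDF_zero, show 2 * β / π = 4 * β / (2 * π) by field_simp; ring,
    sqrt_div' _ (by positivity), sqrt_mul (by norm_num),
    show √4 = 2 by rw [show (4 : ℝ) = 2 ^ 2 by norm_num, sqrt_sq zero_le_two]]
  ring

lemma two_mul_lt_sqrt_one_add_four_mul_sq (r : ℝ) : 2 * r < √(1 + 4 * r ^ 2) :=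
  lt_sqrt_of_sq_lt (by linarith)

lemma sqrt_one_add_four_mul_sq_lt {r : ℝ} (hr : 0 < r) : √(1 + 4 * r ^ 2) < 1 + 2 * r :=
  (sqrt_lt' (by linarith)).2 (by nlinarith)

theorem closed_form_equilibrium_c_half_general
    (β r α θ x y z : ℝ) (hr : 0 < r)
    (hα : α = 1 + 2 * r - Real.sqrt (1 + 4 * r ^ 2))
    (hθ : θ = 1 + r - 1 / 2 * Real.sqrt (1 + 4 * r ^ 2))
    (hx : x = θ)
    (hy : y = r * Real.sqrt (2 * β / Real.pi) * (Real.sqrt (1 + 4 * r ^ 2) - 2 * r))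
    (hz : z = r * Real.sqrt (2 * β / Real.pi) * (Real.sqrt (1 + 4 * r ^ 2) - 2 * r)) :
    α ∈ Set.Ioo (0 : ℝ) 1 ∧
    θ = α + (1 - α) * (1 / 2) ∧
    stdNormalCDF (Real.sqrt β * (θ - x)) = 1 / 2 ∧
    x = θ + y - z ∧
    y = Real.sqrt β * stdNormalPDF 0 * α * (1 - α / 2) ∧
    z = 2 * r * Real.sqrt β * (1 - α) * stdNormalPDF 0 := by
  have hs_sq : √(1 + 4 * r ^ 2) ^ 2 = 1 + 4 * r ^ 2 := sq_sqrt (by positivity)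
  have h_lower := two_mul_lt_sqrt_one_add_four_mul_sq r
  have h_upper := sqrt_one_add_four_mul_sq_lt hr
  rw [sqrt_two_mul_div_pi] at hy hz
  subst hα hθ hx hy hz
  refine ⟨⟨by linarith, by linarith⟩, by ring, by simp [stdNormalCDF_zero], by ring, ?_, by ring⟩
  linear_combination (√β * stdNormalPDF 0 / 2) * hs_sq

/-- For `β > 0`, `r > 0`, the closed forms
`α* = 1 + 2r − √(1+4r²)`, `θ* = 1 + r − ½√(1+4r²)`, `x* = θ*`,
`y* = z* = r√(2β/π)(√(1+4r²) − 2r)` satisfy: (i) `α* ∈ (0,1)`; (ii) regime indifference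
`θ* = α* + (1 − α*)·½`; (iii) citizen indifference `Φ(√β(θ* − x*)) = ½`;
(iv) `x* = θ* + y* − z*`; (v) regime FOC `y* = √β·φ(0)·α*(1 − α*/2)`;
(vi) opposition FOC `z* = 2r√β(1 − α*)φ(0)`. -/
theorem closed_form_equilibrium_c_half
    (β r α θ x y z : ℝ) (hβ : 0 < β) (hr : 0 < r)
    (hα : α = 1 + 2 * r - Real.sqrt (1 + 4 * r ^ 2))
    (hθ : θ = 1 + r - 1 / 2 * Real.sqrt (1 + 4 * r ^ 2))
    (hx : x = θ)
    (hy : y = r * Real.sqrt (2 * β / Real.pi) * (Real.sqrt (1 + 4 * r ^ 2) - 2 * r))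
    (hz : z = r * Real.sqrt (2 * β / Real.pi) * (Real.sqrt (1 + 4 * r ^ 2) - 2 * r)) :
    α ∈ Set.Ioo (0 : ℝ) 1 ∧
    θ = α + (1 - α) * (1 / 2) ∧
    stdNormalCDF (Real.sqrt β * (θ - x)) = 1 / 2 ∧
    x = θ + y - z ∧
    y = Real.sqrt β * stdNormalPDF 0 * α * (1 - α / 2) ∧
    z = 2 * r * Real.sqrt β * (1 - α) * stdNormalPDF 0 :=
  closed_form_equilibrium_c_half_general β r α θ x y z hr hα hθ hx hy hz
end
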